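/- arXiv:1510.02959 — 2 statements merged into one kernel-verified Lean document; each statement's English description precedes it below -/
import Mathlib

section
/- There exists a sequence of signs ε_k ∈ {−1, +1} such that for every m ≥ 0, the sup norm over x ∈ ℝ of |∑_{k=0}^{m} ε_k e^{ikx}| is at most 5√(m+1). -/
/-!
Shapiro's pairs `P₀ = Q₀ = 1`, `P_{n+1} = P_n + z^{2^n} Q_n`, `Q_{n+1} = P_n - z^{2^n} Q_n` satisfy
`|P_n|² + |Q_n|² = 2^{n+1}` on the unit circle by the parallelogram law, so `|P_n|, |Q_n| ≤ √(2·2^n)`.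
A partial sum of `P_{n+1}` or `Q_{n+1}` of length `2^n + r` is `P_n ± z^{2^n}` times a partial sum of
`Q_n` of length `r`, and `√(2s) + 5√r ≤ 5√(s + r)` for `r ≤ s`; so induction on `n` bounds every
partial sum of length `N` by `5√N`. Since `P_{n+1}` extends `P_n`, the coefficients of the `P_n`
form a single sign sequence.
-/

open Complex Finset

/-- `rudinShapiro n 1` and `rudinShapiro n (-1)` are the coefficients of `P_n` and `Q_n`; in general
`σ` is the sign in front of `z^{2^(n-1)} Q_{n-1}`. -/
def rudinShapiro : ℕ → ℤˣ → ℕ → ℤˣ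
  | 0, _, _ => 1
  | n + 1, σ, k => if k < 2 ^ n then rudinShapiro n 1 k else σ * rudinShapiro n (-1) (k - 2 ^ n)

namespace rudinShapiro

theorem succ_of_lt {n k : ℕ} (σ : ℤˣ) (hk : k < 2 ^ n) :
    rudinShapiro (n + 1) σ k = rudinShapiro n 1 k := by
  simp [rudinShapiro, hk]

theorem succ_two_pow_add (n k : ℕ) (σ : ℤˣ) :
    rudinShapiro (n + 1) σ (2 ^ n + k) = σ * rudinShapiro n (-1) k := by
  simp [rudinShapiro]

theorem one_eq_of_le {n m k : ℕ} (hk : k < 2 ^ n) (hnm : n ≤ m) :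
    rudinShapiro m 1 k = rudinShapiro n 1 k := by
  induction m, hnm using Nat.le_induction with
  | base => rfl
  | succ m hnm ih =>
    rw [succ_of_lt 1 (hk.trans_le (Nat.pow_le_pow_right two_pos hnm)), ih]

end rudinShapiro

theorem norm_intCast_units (u : ℤˣ) : ‖((u : ℤ) : ℂ)‖ = 1 := by
  rcases Int.units_eq_one_or u with rfl | rfl <;> simp

theorem norm_intCast_units_mul_pow_mul {z : ℂ} (hz : ‖z‖ = 1) (σ : ℤˣ) (n : ℕ) (w : ℂ) :
    ‖((σ : ℤ) : ℂ) * z ^ n * w‖ = ‖w‖ := by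
  rw [norm_mul, norm_mul, norm_pow, hz, norm_intCast_units, one_pow, one_mul, one_mul]

theorem sqrt_two_mul_add_five_mul_sqrt_le {r s : ℝ} (hr : 0 ≤ r) (hrs : r ≤ s) :
    √(2 * s) + 5 * √r ≤ 5 * √(s + r) := by
  have h25 : 5 * √(s + r) = √(25 * (s + r)) := by
    rw [Real.sqrt_mul (by norm_num), show (25 : ℝ) = 5 ^ 2 by norm_num, Real.sqrt_sq (by norm_num)]
  rw [h25, Real.le_sqrt (by positivity) (by linarith)]
  have ha := Real.sq_sqrt (by linarith : 0 ≤ 2 * s)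
  have hb := Real.sq_sqrt hr
  -- AM-GM: `10 √(2s) √r ≤ 5 (2s + r)`
  nlinarith [sq_nonneg (√(2 * s) - √r)]

noncomputable def rudinShapiroSum (n : ℕ) (σ : ℤˣ) (N : ℕ) (z : ℂ) : ℂ :=
  ∑ k ∈ range N, ((rudinShapiro n σ k : ℤ) : ℂ) * z ^ k

namespace rudinShapiroSum

variable {z : ℂ}

theorem succ_of_le {n N : ℕ} (σ : ℤˣ) (hN : N ≤ 2 ^ n) :
    rudinShapiroSum (n + 1) σ N z = rudinShapiroSum n 1 N z :=
  sum_congr rfl fun k hk => by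
    rw [rudinShapiro.succ_of_lt σ ((mem_range.mp hk).trans_le hN)]

theorem succ_two_pow_add (n r : ℕ) (σ : ℤˣ) (z : ℂ) :
    rudinShapiroSum (n + 1) σ (2 ^ n + r) z =
      rudinShapiroSum n 1 (2 ^ n) z + (σ : ℤ) * z ^ 2 ^ n * rudinShapiroSum n (-1) r z := by
  rw [← succ_of_le σ le_rfl, rudinShapiroSum, rudinShapiroSum, rudinShapiroSum, sum_range_add,
    mul_sum]
  congr 1
  refine sum_congr rfl fun k _ => ?_
  rw [rudinShapiro.succ_two_pow_add, pow_add]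
  push_cast
  ring

theorem norm_sq_add_norm_sq_neg (hz : ‖z‖ = 1) (n : ℕ) (σ : ℤˣ) :
    ‖rudinShapiroSum n σ (2 ^ n) z‖ ^ 2 + ‖rudinShapiroSum n (-σ) (2 ^ n) z‖ ^ 2 = 2 ^ (n + 1) := by
  induction n generalizing σ with
  | zero => norm_num [rudinShapiroSum, rudinShapiro]
  | succ n ih =>
    rw [pow_succ 2 n, mul_two, succ_two_pow_add, succ_two_pow_add, Units.val_neg, Int.cast_neg,
      neg_mul, neg_mul, ← sub_eq_add_neg]
    set P := rudinShapiroSum n 1 (2 ^ n) z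
    set w := ((σ : ℤ) : ℂ) * z ^ 2 ^ n * rudinShapiroSum n (-1) (2 ^ n) z
    calc ‖P + w‖ ^ 2 + ‖P - w‖ ^ 2 = 2 * (‖P‖ ^ 2 + ‖w‖ ^ 2) := by
          simpa only [sq] using parallelogram_law_with_norm ℝ P w
      _ = 2 ^ (n + 1 + 1) := by rw [norm_intCast_units_mul_pow_mul hz, ih 1]; ring

theorem norm_le_sqrt (hz : ‖z‖ = 1) (n : ℕ) (σ : ℤˣ) :
    ‖rudinShapiroSum n σ (2 ^ n) z‖ ≤ √(2 * 2 ^ n) := by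
  have h := norm_sq_add_norm_sq_neg hz n σ
  rw [pow_succ' (2 : ℝ)] at h
  exact Real.le_sqrt_of_sq_le (by nlinarith [sq_nonneg ‖rudinShapiroSum n (-σ) (2 ^ n) z‖])

theorem norm_le_five_mul_sqrt (hz : ‖z‖ = 1) {n N : ℕ} (σ : ℤˣ) (hN : N ≤ 2 ^ n) :
    ‖rudinShapiroSum n σ N z‖ ≤ 5 * √N := by
  induction n generalizing σ N with
  | zero => interval_cases N <;> simp [rudinShapiroSum, rudinShapiro]
  | succ n ih =>
    rcases le_or_gt N (2 ^ n) with hle | hlt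
    · rw [succ_of_le σ hle]
      exact ih 1 hle
    obtain ⟨r, rfl⟩ := Nat.exists_eq_add_of_le hlt.le
    have hr : r ≤ 2 ^ n := by rw [pow_succ] at hN; omega
    calc ‖rudinShapiroSum (n + 1) σ (2 ^ n + r) z‖
        ≤ ‖rudinShapiroSum n 1 (2 ^ n) z‖ + ‖rudinShapiroSum n (-1) r z‖ := by
          rw [succ_two_pow_add]
          exact (norm_add_le _ _).trans_eq (by rw [norm_intCast_units_mul_pow_mul hz])
      _ ≤ √(2 * 2 ^ n) + 5 * √r := add_le_add (norm_le_sqrt hz n 1) (ih (-1) hr)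
      _ ≤ 5 * √(2 ^ n + r) := sqrt_two_mul_add_five_mul_sqrt_le r.cast_nonneg (by exact_mod_cast hr)
      _ = 5 * √((2 ^ n + r : ℕ) : ℝ) := by push_cast; rfl

end rudinShapiroSum

def rudinShapiroSeq (k : ℕ) : ℤˣ := rudinShapiro k 1 k

theorem rudinShapiroSeq_eq {n k : ℕ} (hk : k < 2 ^ n) : rudinShapiroSeq k = rudinShapiro n 1 k := by
  rw [rudinShapiroSeq, ← rudinShapiro.one_eq_of_le Nat.lt_two_pow_self (le_max_left k n),
    rudinShapiro.one_eq_of_le hk (le_max_right k n)]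

theorem sum_rudinShapiroSeq_eq {n N : ℕ} (hN : N ≤ 2 ^ n) (z : ℂ) :
    ∑ k ∈ range N, ((rudinShapiroSeq k : ℤ) : ℂ) * z ^ k = rudinShapiroSum n 1 N z :=
  sum_congr rfl fun k hk => by rw [rudinShapiroSeq_eq ((mem_range.mp hk).trans_le hN)]

/-- Rudin–Shapiro: there is a sequence of signs `ε k = ±1` such that for every `m`,
the sup norm of `∑_{k=0}^m ε_k e^{ikx}` is at most `5 √(m+1)`. -/
theorem rudin_shapiro :
    ∃ ε : ℕ → ℝ, (∀ k, ε k = 1 ∨ ε k = -1) ∧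
      ∀ m : ℕ, ∀ x : ℝ,
        ‖∑ k ∈ Finset.range (m + 1), (ε k : ℂ) * Complex.exp (Complex.I * k * x)‖
          ≤ 5 * Real.sqrt (m + 1) := by
  refine ⟨fun k => (rudinShapiroSeq k : ℤ), fun k => ?_, fun m x => ?_⟩
  · rcases Int.units_eq_one_or (rudinShapiroSeq k) with h | h <;> simp [h]
  have hz : ‖exp (x * I)‖ = 1 := norm_exp_ofReal_mul_I x
  have hN : m + 1 ≤ 2 ^ (m + 1) := Nat.lt_two_pow_self.le
  calc _ = ‖rudinShapiroSum (m + 1) 1 (m + 1) (exp (x * I))‖ := by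
        rw [← sum_rudinShapiroSeq_eq hN]
        congr 1
        refine sum_congr rfl fun k _ => ?_
        rw [← exp_nat_mul]
        push_cast
        ring_nf
    _ ≤ 5 * √((m + 1 : ℕ) : ℝ) := rudinShapiroSum.norm_le_five_mul_sqrt hz 1 hN
    _ = 5 * √(m + 1) := by push_cast; rfl
end

section
/- Let r > 0, β ∈ ℝ, 1 ≤ s < ∞. Then the best approximation by trigonometric polynomials of degree < n of the Weyl–Nagy class W^r_{β,∞} in the L_s metric satisfies E_n(W^r_{β,∞})_s ≥ (1/2) n^{−r}. -/
/-! The extremal function is `n^{-r} cos (n t)`, whose `(ψ, β)`-derivative `cos (n t + β π / 2)` is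
bounded by one. A trigonometric polynomial of degree `< n` has vanishing `n`-th Fourier
coefficient, so the `n`-th coefficient of the error is `n^{-r} / 2`; and on a period of length
`2π ≥ 1` a Fourier coefficient is bounded by `(2π)⁻¹ ‖·‖₁ ≤ (2π)^{-1/s} ‖·‖_s ≤ ‖·‖_s`. -/

open MeasureTheory Real Complex Finset
open scoped ENNReal

/-- The `k`-th Fourier coefficient of a `2π`-periodic function. -/
noncomputable def fourierCoef (f : ℝ → ℂ) (k : ℤ) : ℂ :=
  (1 / (2 * π)) * ∫ t in (-π)..π, f t * Complex.exp (-Complex.I * k * t)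

/-- Membership in the Weyl–Nagy class `W^r_{β,∞}`. -/
def WeylNagyClass (r β : ℝ) (f : ℝ → ℝ) : Prop :=
  (∀ t, f (t + 2 * π) = f t) ∧ IntervalIntegrable f volume (-π) π ∧
  ∃ g : ℝ → ℝ, (∀ t, g (t + 2 * π) = g t) ∧ IntervalIntegrable g volume (-π) π ∧
    (∀ᵐ t : ℝ, |g t| ≤ 1) ∧
    fourierCoef (fun t => (g t : ℂ)) 0 = 0 ∧
    ∀ k : ℤ, k ≠ 0 →
      fourierCoef (fun t => (g t : ℂ)) k
        = ((k.natAbs : ℝ) ^ r : ℝ) * fourierCoef (fun t => (f t : ℂ)) k *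
            Complex.exp (Complex.I * (β * π / 2) * (k.sign : ℤ))

/-- Real trigonometric polynomials of degree at most `n - 1`. -/
def IsRealTrigPoly (n : ℕ) (T : ℝ → ℝ) : Prop :=
  ∃ c : ℤ → ℂ, (∀ k : ℤ, c (-k) = (starRingEnd ℂ) (c k)) ∧
    ∀ t : ℝ, (T t : ℂ) =
      ∑ k ∈ Finset.Icc (1 - (n : ℤ)) ((n : ℤ) - 1), c k * Complex.exp (Complex.I * k * t)

/-- Best approximation of the class `W^r_{β,∞}` by trigonometric polynomials of
degree `< n` in the `L_s` metric. -/
noncomputable def EnWeylNagy (r β : ℝ) (n : ℕ) (s : ℝ≥0∞) : ℝ≥0∞ :=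
  ⨆ f : {f : ℝ → ℝ // WeylNagyClass r β f},
    ⨅ T : {T : ℝ → ℝ // IsRealTrigPoly n T},
      eLpNorm (fun t : ℝ => f.1 t - T.1 t) s (volume.restrict (Set.Ioc (0 : ℝ) (2 * π)))

open Function

lemma integral_cexp_I_mul_int (m : ℤ) :
    ∫ t in (-π)..π, cexp (I * m * t) = if m = 0 then (2 * π : ℂ) else 0 := by
  split_ifs with hm
  · simp [hm, two_mul]
  · have hc : I * m ≠ 0 := by simp [I_ne_zero, hm]
    have hper : cexp (I * m * π) = cexp (I * m * (-π : ℝ)) := by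
      rw [show I * m * π = I * m * (-π : ℝ) + m * (2 * π * I) by push_cast; ring,
        Complex.exp_add, exp_int_mul_two_pi_mul_I, mul_one]
    rw [integral_exp_mul_complex hc, hper, sub_self, zero_div]

lemma fourierCoef_cexp_I_mul_int (m k : ℤ) :
    fourierCoef (fun t => cexp (I * m * t)) k = if k = m then 1 else 0 := by
  have hmul : ∀ t : ℝ,
      cexp (I * m * t) * cexp (-I * k * t) = cexp (I * ((m - k : ℤ) : ℂ) * t) := by
    intro t
    rw [← Complex.exp_add]
    push_cast
    ring_nf
  unfold fourierCoef
  simp_rw [hmul, integral_cexp_I_mul_int, sub_eq_zero, eq_comm (a := m)]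
  split_ifs
  · field_simp
  · rw [mul_zero]

lemma fourierCoef_const_mul (a : ℂ) (f : ℝ → ℂ) (k : ℤ) :
    fourierCoef (fun t => a * f t) k = a * fourierCoef f k := by
  unfold fourierCoef
  simp_rw [mul_assoc, intervalIntegral.integral_const_mul]
  ring

section Linearity

variable {f g : ℝ → ℂ}

lemma IntervalIntegrable.mul_cexp_neg_I_mul_int (hf : IntervalIntegrable f volume (-π) π)
    (k : ℤ) : IntervalIntegrable (fun t => f t * cexp (-I * k * t)) volume (-π) π :=
  hf.mul_continuousOn (Continuous.continuousOn (by fun_prop))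

lemma fourierCoef_add (hf : IntervalIntegrable f volume (-π) π)
    (hg : IntervalIntegrable g volume (-π) π) (k : ℤ) :
    fourierCoef (fun t => f t + g t) k = fourierCoef f k + fourierCoef g k := by
  unfold fourierCoef
  simp_rw [add_mul]
  rw [intervalIntegral.integral_add (hf.mul_cexp_neg_I_mul_int k) (hg.mul_cexp_neg_I_mul_int k),
    mul_add]

lemma fourierCoef_sub (hf : IntervalIntegrable f volume (-π) π)
    (hg : IntervalIntegrable g volume (-π) π) (k : ℤ) :
    fourierCoef (fun t => f t - g t) k = fourierCoef f k - fourierCoef g k := by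
  unfold fourierCoef
  simp_rw [sub_mul]
  rw [intervalIntegral.integral_sub (hf.mul_cexp_neg_I_mul_int k) (hg.mul_cexp_neg_I_mul_int k),
    mul_sub]

lemma fourierCoef_finset_sum {ι : Type*} (S : Finset ι) {F : ι → ℝ → ℂ}
    (hF : ∀ i ∈ S, IntervalIntegrable (F i) volume (-π) π) (k : ℤ) :
    fourierCoef (fun t => ∑ i ∈ S, F i t) k = ∑ i ∈ S, fourierCoef (F i) k := by
  unfold fourierCoef
  simp_rw [Finset.sum_mul]
  rw [intervalIntegral.integral_finsetSum fun i hi => (hF i hi).mul_cexp_neg_I_mul_int k,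
    Finset.mul_sum]

end Linearity

lemma fourierCoef_sum_const_mul_cexp (S : Finset ℤ) (c : ℤ → ℂ) (k : ℤ) :
    fourierCoef (fun t => ∑ j ∈ S, c j * cexp (I * j * t)) k = if k ∈ S then c k else 0 := by
  rw [fourierCoef_finset_sum S fun j _ => Continuous.intervalIntegrable (by fun_prop) _ _]
  simp_rw [fourierCoef_const_mul, fourierCoef_cexp_I_mul_int, mul_ite, mul_one, mul_zero,
    Finset.sum_ite_eq]

lemma norm_fourierCoef_le (f : ℝ → ℂ) (k : ℤ) :
    ‖fourierCoef f k‖ ≤ (2 * π)⁻¹ * ∫ t in (-π)..π, ‖f t‖ := by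
  unfold fourierCoef
  rw [norm_mul, one_div, norm_inv, norm_mul, Complex.norm_two, norm_real, norm_of_nonneg pi_pos.le]
  gcongr
  calc ‖∫ t in (-π)..π, f t * cexp (-I * k * t)‖
      ≤ ∫ t in (-π)..π, ‖f t * cexp (-I * k * t)‖ :=
        intervalIntegral.norm_integral_le_integral_norm (by linarith [pi_pos])
    _ = ∫ t in (-π)..π, ‖f t‖ := by
        congr 1 with t
        rw [norm_mul, norm_exp]
        simp

lemma ofReal_cos_eq_cexp (x : ℝ) :
    ((Real.cos x : ℝ) : ℂ) = cexp (I * x) / 2 + cexp (-(I * x)) / 2 := by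
  simp only [ofReal_cos, Complex.cos]
  ring_nf

lemma periodic_cos_nat_mul_add (n : ℕ) (c : ℝ) :
    Periodic (fun t => Real.cos (n * t + c)) (2 * π) :=
  fun t => by simp [mul_add, add_right_comm]

lemma fourierCoef_cos_nat_mul_add {n : ℕ} (hn : n ≠ 0) (c : ℝ) (k : ℤ) :
    fourierCoef (fun t => ((Real.cos (n * t + c) : ℝ) : ℂ)) k
      = if k.natAbs = n then cexp (I * c * k.sign) / 2 else 0 := by
  have hexp : ∀ t : ℝ, ((Real.cos (n * t + c) : ℝ) : ℂ)
      = cexp (I * c) / 2 * cexp (I * (n : ℤ) * t)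
        + cexp (-(I * c)) / 2 * cexp (I * (-n : ℤ) * t) := by
    intro t
    simp only [ofReal_cos_eq_cexp, div_mul_eq_mul_div, ← Complex.exp_add]
    push_cast
    ring_nf
  simp_rw [hexp]
  rw [fourierCoef_add (Continuous.intervalIntegrable (by fun_prop) _ _)
      (Continuous.intervalIntegrable (by fun_prop) _ _),
    fourierCoef_const_mul, fourierCoef_const_mul,
    fourierCoef_cexp_I_mul_int, fourierCoef_cexp_I_mul_int]
  by_cases hpos : k = n
  · have hsign : k.sign = 1 := Int.sign_eq_one_of_pos (by omega)
    rw [hsign]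
    simp [hpos, hn]
  by_cases hneg : k = -n
  · have hsign : k.sign = -1 := Int.sign_eq_neg_one_of_neg (by omega)
    rw [hsign]
    simp [hneg, hn]
  · have : k.natAbs ≠ n := by omega
    simp [hpos, hneg, this]

lemma fourierCoef_mul_cos_nat_mul {n : ℕ} (hn : n ≠ 0) (a : ℝ) (k : ℤ) :
    fourierCoef (fun t => ((a * Real.cos (n * t) : ℝ) : ℂ)) k
      = if k.natAbs = n then (a / 2 : ℂ) else 0 := by
  have hcos := fourierCoef_cos_nat_mul_add hn 0 k
  simp only [add_zero, ofReal_zero, mul_zero, zero_mul, Complex.exp_zero] at hcos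
  simp_rw [ofReal_mul, fourierCoef_const_mul, hcos, mul_ite, mul_zero, mul_one_div]

lemma weylNagyClass_rpow_neg_mul_cos (r β : ℝ) {n : ℕ} (hn : n ≠ 0) :
    WeylNagyClass r β (fun t => (n : ℝ) ^ (-r) * Real.cos (n * t)) := by
  refine ⟨fun t => by simp [mul_add],
    Continuous.intervalIntegrable (by fun_prop) _ _,
    fun t => Real.cos (n * t + β * π / 2), periodic_cos_nat_mul_add n (β * π / 2),
    Continuous.intervalIntegrable (by fun_prop) _ _,
    Filter.Eventually.of_forall fun t => abs_cos_le_one _, ?_, fun k _ => ?_⟩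
  · rw [fourierCoef_cos_nat_mul_add hn, if_neg (by simpa using hn.symm)]
  · rw [fourierCoef_cos_nat_mul_add hn, fourierCoef_mul_cos_nat_mul hn]
    split_ifs with hk
    · have hcancel : (((n : ℝ) ^ r : ℝ) : ℂ) * ((n : ℝ) ^ (-r) : ℝ) = 1 := by
        rw [← ofReal_mul, ← rpow_add (by positivity), add_neg_cancel, rpow_zero, ofReal_one]
      simp only [hk, ofReal_div, ofReal_mul, ofReal_ofNat]
      linear_combination (-(cexp (I * (β * π / 2) * k.sign)) / 2) * hcancel
    · simp

lemma periodic_cexp_I_mul_int (j : ℤ) : Periodic (fun t : ℝ => cexp (I * j * t)) (2 * π) :=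
  fun t => by
    dsimp only
    rw [show I * j * ((t + 2 * π : ℝ) : ℂ) = I * j * t + j * (2 * π * I) by push_cast; ring,
      Complex.exp_add, exp_int_mul_two_pi_mul_I, mul_one]

namespace IsRealTrigPoly

variable {n : ℕ} {T : ℝ → ℝ}

lemma continuous (hT : IsRealTrigPoly n T) : Continuous T := by
  obtain ⟨c, -, hc⟩ := hT
  have hS : Continuous fun t : ℝ => (T t : ℂ) := by
    simp_rw [hc]
    fun_prop
  exact (continuous_re.comp hS).congr fun t => ofReal_re (T t)

lemma periodic (hT : IsRealTrigPoly n T) : Periodic T (2 * π) := by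
  obtain ⟨c, -, hc⟩ := hT
  intro t
  apply ofReal_injective
  simp only [hc]
  exact Finset.sum_congr rfl fun j _ => congrArg (c j * ·) (periodic_cexp_I_mul_int j t)

lemma fourierCoef_eq_zero (hT : IsRealTrigPoly n T) {k : ℤ} (hk : n ≤ k.natAbs) :
    fourierCoef (fun t => (T t : ℂ)) k = 0 := by
  obtain ⟨c, -, hc⟩ := hT
  simp_rw [hc, fourierCoef_sum_const_mul_cexp, Finset.mem_Icc]
  exact if_neg (by omega)

lemma fourierCoef_sub_eq (hT : IsRealTrigPoly n T) {f : ℝ → ℝ}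
    (hf : IntervalIntegrable (fun t => (f t : ℂ)) volume (-π) π) {k : ℤ} (hk : n ≤ k.natAbs) :
    fourierCoef (fun t => ((f t - T t : ℝ) : ℂ)) k = fourierCoef (fun t => (f t : ℂ)) k := by
  have hTint : IntervalIntegrable (fun t => (T t : ℂ)) volume (-π) π :=
    (continuous_ofReal.comp hT.continuous).intervalIntegrable _ _
  simp_rw [ofReal_sub]
  rw [fourierCoef_sub hf hTint, hT.fourierCoef_eq_zero hk, sub_zero]

end IsRealTrigPoly

lemma norm_fourierCoef_le_of_periodic {f : ℝ → ℂ} (hf : Periodic f (2 * π)) (k : ℤ) :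
    ‖fourierCoef f k‖ ≤ (2 * π)⁻¹ * ∫ t in (0)..(2 * π), ‖f t‖ := by
  have hshift := (hf.comp (‖·‖)).intervalIntegral_add_eq (-π) 0
  rw [show -π + 2 * π = π by ring, zero_add] at hshift
  exact hshift ▸ norm_fourierCoef_le f k

lemma eLpNorm_one_le_eLpNorm_mul_measure_univ {α E : Type*} [MeasurableSpace α]
    [NormedAddCommGroup E] {μ : Measure α} {f : α → E} {s : ℝ≥0∞} (hs : 1 ≤ s)
    (hμ : 1 ≤ μ Set.univ) (hf : AEStronglyMeasurable f μ) :
    eLpNorm f 1 μ ≤ eLpNorm f s μ * μ Set.univ := by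
  refine (eLpNorm_le_eLpNorm_mul_rpow_measure_univ hs hf).trans (mul_le_mul_right ?_ _)
  conv_rhs => rw [← ENNReal.rpow_one (μ Set.univ)]
  gcongr
  simp only [ENNReal.toReal_one, div_one]
  linarith [show 0 ≤ 1 / s.toReal by positivity]

lemma ofReal_norm_fourierCoef_le_eLpNorm {h : ℝ → ℝ} (hper : Periodic h (2 * π))
    (hint : IntegrableOn h (Set.Ioc 0 (2 * π))) {s : ℝ≥0∞} (hs : 1 ≤ s) (k : ℤ) :
    ENNReal.ofReal ‖fourierCoef (fun t => (h t : ℂ)) k‖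
      ≤ eLpNorm h s (volume.restrict (Set.Ioc 0 (2 * π))) := by
  set μ := volume.restrict (Set.Ioc (0 : ℝ) (2 * π))
  have hμ : μ Set.univ = ENNReal.ofReal (2 * π) := by
    rw [Measure.restrict_apply_univ, Real.volume_Ioc, sub_zero]
  have hL1 : ENNReal.ofReal (∫ t in (0)..(2 * π), |h t|) = eLpNorm h 1 μ := by
    rw [intervalIntegral.integral_of_le two_pi_pos.le, eLpNorm_one_eq_lintegral_enorm,
      ← ofReal_integral_norm_eq_lintegral_enorm hint]
    rfl
  have hcoef := norm_fourierCoef_le_of_periodic (f := fun t => (h t : ℂ))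
    (fun t => congrArg ofReal (hper t)) k
  simp only [norm_real, Real.norm_eq_abs] at hcoef
  calc ENNReal.ofReal ‖fourierCoef (fun t => (h t : ℂ)) k‖
      ≤ ENNReal.ofReal ((2 * π)⁻¹ * ∫ t in (0)..(2 * π), |h t|) := ENNReal.ofReal_le_ofReal hcoef
    _ = ENNReal.ofReal (2 * π)⁻¹ * eLpNorm h 1 μ := by
        rw [ENNReal.ofReal_mul (by positivity), hL1]
    _ ≤ ENNReal.ofReal (2 * π)⁻¹ * (eLpNorm h s μ * μ Set.univ) := by
        gcongr
        refine eLpNorm_one_le_eLpNorm_mul_measure_univ hs ?_ hint.aestronglyMeasurable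
        rw [hμ, ENNReal.one_le_ofReal]
        linarith [pi_gt_three]
    _ = eLpNorm h s μ := by
        rw [hμ, mul_left_comm, ← ENNReal.ofReal_mul (by positivity),
          inv_mul_cancel₀ two_pi_pos.ne', ENNReal.ofReal_one, mul_one]

theorem En_weylNagy_lower_general (r β : ℝ) (s : ℝ≥0∞) (hs1 : 1 ≤ s)
    (n : ℕ) (hn : 1 ≤ n) :
    ENNReal.ofReal ((1 / 2) * (n : ℝ) ^ (-r)) ≤ EnWeylNagy r β n s := by
  have hn0 : n ≠ 0 := Nat.one_le_iff_ne_zero.mp hn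
  set f₁ : ℝ → ℝ := fun t => (n : ℝ) ^ (-r) * Real.cos (n * t)
  have hf₁ : WeylNagyClass r β f₁ := weylNagyClass_rpow_neg_mul_cos r β hn0
  refine le_iSup_of_le ⟨f₁, hf₁⟩ (le_iInf fun ⟨T, hT⟩ => ?_)
  have hcont : Continuous f₁ := by fun_prop
  have hcoef : fourierCoef (fun t => ((f₁ t - T t : ℝ) : ℂ)) n = ((n : ℝ) ^ (-r) / 2 : ℝ) := by
    rw [hT.fourierCoef_sub_eq ((continuous_ofReal.comp hcont).intervalIntegrable _ _) le_rfl,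
      fourierCoef_mul_cos_nat_mul hn0, if_pos (Int.natAbs_natCast n), ofReal_div, ofReal_ofNat]
  calc ENNReal.ofReal ((1 / 2) * (n : ℝ) ^ (-r))
      = ENNReal.ofReal ‖fourierCoef (fun t => ((f₁ t - T t : ℝ) : ℂ)) n‖ := by
        rw [hcoef, norm_real, Real.norm_of_nonneg (by positivity), one_div_mul_eq_div]
    _ ≤ _ := ofReal_norm_fourierCoef_le_eLpNorm (Periodic.sub hf₁.1 hT.periodic)
        (hcont.sub hT.continuous).integrableOn_Ioc hs1 n

/-- Lower estimate for the best approximation of the Weyl–Nagy class: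
`E_n(W^r_{β,∞})_s ≥ (1/2) n^{-r}` for `1 ≤ s < ∞`. -/
theorem En_weylNagy_lower (r β : ℝ) (hr : 0 < r) (s : ℝ≥0∞) (hs1 : 1 ≤ s) (hs2 : s ≠ ⊤)
    (n : ℕ) (hn : 1 ≤ n) :
    ENNReal.ofReal ((1 / 2) * (n : ℝ) ^ (-r)) ≤ EnWeylNagy r β n s :=
  En_weylNagy_lower_general r β s hs1 n hn
end
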